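/- For all real γ, κ and every integer k ≥ 0, the generalized Bernoulli functions satisfy 𝒞_k(⟨−γ⟩, −κ) = (−1)^k·𝒞_k(⟨γ⟩, κ) − δ_{k1}·δ(γ), where δ_{k1} = 1 if k = 1 and 0 otherwise, and δ(γ) = 1 if γ ∈ ℤ and 0 otherwise. -/

import Mathlib

noncomputable section

open Complex MeasureTheory
open scoped Real Classical

/-- `e(s) = exp(2 π i s)`. -/
def ee (s : ℂ) : ℂ := Complex.exp (2 * (Real.pi : ℂ) * Complex.I * s)

/-- `δ(x) = 1` if `x ∈ ℤ`, `0` otherwise. -/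
def dInt (x : ℝ) : ℂ := if ∃ n : ℤ, (n : ℝ) = x then 1 else 0

/-- The Lerch zeta function `ψ(r,γ,κ) = Σ_{k ∈ ℤ, γ+k>0} e((γ+k)κ) (γ+k)^{-r}`
(a convergent series when `Re r > 1`). -/
def psiL (r : ℂ) (γ κ : ℝ) : ℂ :=
  ∑' k : {k : ℤ // 0 < γ + (k : ℝ)},
    ee ((((γ + (k.1 : ℝ)) * κ : ℝ)) : ℂ) * (((γ + (k.1 : ℝ)) : ℝ) : ℂ) ^ (-r)

/-- The `q`-series `𝒮_r(γ,δ;κ,λ;q)`, where `q = e^{-2πt}` with `Re t > 0`, and the power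
`q^{(γ+k)(δ+l)}` is interpreted as `exp (-2πt(γ+k)(δ+l))`. -/
def Scal (r : ℂ) (γ δ' κ lam : ℝ) (t : ℂ) : ℂ :=
  ∑' (k : {k : ℤ // 0 < γ + (k : ℝ)}) (l : {l : ℤ // 0 < δ' + (l : ℝ)}),
    ee ((((γ + (k.1 : ℝ)) * κ + (δ' + (l.1 : ℝ)) * lam : ℝ)) : ℂ) *
      (((δ' + (l.1 : ℝ)) : ℝ) : ℂ) ^ (-r) *
      Complex.exp (-2 * (Real.pi : ℂ) * t * ((γ + (k.1 : ℝ) : ℝ) : ℂ) * ((δ' + (l.1 : ℝ) : ℝ) : ℂ))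

/-- The generalized Eisenstein series `F_{ℤ²}(s;α,β;μ,ν;z)` (mean of the two branch
conventions), defined by an absolutely convergent series for `Re s > 2`. -/
def Fz2 (s : ℂ) (α β μ ν : ℝ) (z : ℂ) : ℂ :=
  (∑' p : {p : ℤ × ℤ // β + (p.2 : ℝ) ≠ 0},
      ee ((((α + (p.1.1 : ℝ)) * μ + (β + (p.1.2 : ℝ)) * ν : ℝ)) : ℂ) *
        ((((α + (p.1.1 : ℝ)) : ℝ) : ℂ) + (((β + (p.1.2 : ℝ)) : ℝ) : ℂ) * z) ^ (-s)) +
  dInt β *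
    ((∑' m : {m : ℤ // 0 < α + (m : ℝ)},
        ee ((((α + (m.1 : ℝ)) * μ : ℝ)) : ℂ) * (((α + (m.1 : ℝ)) : ℝ) : ℂ) ^ (-s)) +
      Complex.cos ((Real.pi : ℂ) * s) *
        ∑' m : {m : ℤ // α + (m : ℝ) < 0},
          ee ((((α + (m.1 : ℝ)) * μ : ℝ)) : ℂ) * ((|α + (m.1 : ℝ)| : ℝ) : ℂ) ^ (-s))

/-- `𝒜(s,α,μ) = cos(πs) ψ(s,-α,-μ) + ψ(s,α,μ)`. -/
def Acal (s : ℂ) (α μ : ℝ) : ℂ :=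
  Complex.cos ((Real.pi : ℂ) * s) * psiL s (-α) (-μ) + psiL s α μ

/-- `ψ(k,γ,κ)` at an integer `k`: the convergent series for `k ≥ 2`, the value
`-𝒞_{1-k}(⟨γ⟩,κ)/(1-k) - δ_{k0} δ(γ)` of the analytic continuation for `k ≤ 0`,
and the (irrelevant) value `0` for `k = 1`; here `C` is the family of Taylor
coefficients `𝒞`. -/
def psiIntC (C : ℕ → ℂ → ℝ → ℂ) (k : ℤ) (γ κ : ℝ) : ℂ :=
  if 2 ≤ k then
    ∑' n : {n : ℤ // 0 < γ + (n : ℝ)},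
      ee ((((γ + (n.1 : ℝ)) * κ : ℝ)) : ℂ) * (((γ + (n.1 : ℝ)) : ℝ) : ℂ) ^ (-k)
  else if k ≤ 0 then
    -C (1 - k).toNat ((Int.fract γ : ℝ) : ℂ) κ / ((1 : ℂ) - (k : ℂ)) -
      (if k = 0 then dInt γ else 0)
  else 0

/-- The Bernoulli polynomial `B_j(x)` evaluated in `ℂ`. -/
def BpolyC (j : ℕ) (x : ℂ) : ℂ := Polynomial.aeval x (Polynomial.bernoulli j)

/-- Weierstrass `℘`-function with periods `(1, z)`. -/
def wpFn (z w : ℂ) : ℂ :=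
  w ^ (-2 : ℤ) + ∑' p : {p : ℤ × ℤ // p ≠ (0, 0)},
    ((w - (p.1.1 : ℂ) - (p.1.2 : ℂ) * z) ^ (-2 : ℤ) -
      ((p.1.1 : ℂ) + (p.1.2 : ℂ) * z) ^ (-2 : ℤ))

/-- Weierstrass zeta function with periods `(1, z)`. -/
def wzetaFn (z w : ℂ) : ℂ :=
  1 / w + ∑' p : {p : ℤ × ℤ // p ≠ (0, 0)},
    (1 / (w - (p.1.1 : ℂ) - (p.1.2 : ℂ) * z) + 1 / ((p.1.1 : ℂ) + (p.1.2 : ℂ) * z) +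
      w / ((p.1.1 : ℂ) + (p.1.2 : ℂ) * z) ^ 2)

/-- Weierstrass sigma function with periods `(1, z)`. -/
def wsigmaFn (z w : ℂ) : ℂ :=
  w * ∏' p : {p : ℤ × ℤ // p ≠ (0, 0)},
    ((1 - w / ((p.1.1 : ℂ) + (p.1.2 : ℂ) * z)) *
      Complex.exp (w / ((p.1.1 : ℂ) + (p.1.2 : ℂ) * z) +
        w ^ 2 / (2 * ((p.1.1 : ℂ) + (p.1.2 : ℂ) * z) ^ 2)))

/-- The `q`-Pochhammer symbol `(Z;q)_∞`. -/
def qPoch (Z q : ℂ) : ℂ := ∏' l : ℕ, (1 - Z * q ^ l)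

/-- `⟨x⟩' = 1 - ⟨-x⟩`. -/
def fracP (x : ℝ) : ℝ := 1 - Int.fract (-x)

/-- The Eisenstein series `E₂`. -/
def E2cl (z : ℂ) : ℂ := 1 - 24 * ∑' l : ℕ+, (l : ℂ) * ee z ^ (l : ℕ) / (1 - ee z ^ (l : ℕ))

/-- `a_{2k}`: `ζ(1-2k)` for `k ≠ 0` and `2ζ'(0) = -log 2π` for `k = 0`. -/
def acoef (k : ℤ) : ℂ :=
  if k = 0 then -(Real.log (2 * Real.pi) : ℂ) else riemannZeta ((1 - 2 * k : ℤ) : ℂ)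

/-- The classical Eisenstein series `E_{2k}`. -/
def Ecl (k : ℤ) (z : ℂ) : ℂ :=
  1 + (2 / acoef k) * ∑' l : ℕ+, (l : ℂ) ^ (2 * k - 1) * ee z ^ (l : ℕ) / (1 - ee z ^ (l : ℕ))

/-- The bilateral Lerch zeta function `ψ_ℤ^ε(r,γ,κ) = e^{-επir} ψ(r,-γ,-κ) + ψ(r,γ,κ)`. -/
def psiZpm (ε : ℤ) (r : ℂ) (γ κ : ℝ) : ℂ :=
  Complex.exp (-(ε : ℂ) * (Real.pi : ℂ) * Complex.I * r) * psiL r (-γ) (-κ) + psiL r γ κ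

/-!
Write `f X κ Z = Z e(Xκ) e^{XZ} / (e(κ) e^Z - 1)` for the generating function. Multiplying
numerator and denominator by `-e(-κ) e^Z` gives `f (1 - X) (-κ) Z = f X κ (-Z)` identically, and
`f 1 κ Z = f 0 κ Z + Z` wherever the denominator is nonzero. For `γ ∉ ℤ` we have
`⟨-γ⟩ = 1 - ⟨γ⟩`, while for `γ ∈ ℤ` both fractional parts vanish and the shift contributes the
term `-Z`. Comparing coefficients, which are determined by the values of a power series on a
punctured neighbourhood of `0` (isolated zeros), gives the identity.
-/

open Filter Topology

section PowerSeries

variable {𝕜 E : Type*} [NontriviallyNormedField 𝕜] [NormedAddCommGroup E] [NormedSpace 𝕜 E]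

theorem eq_zero_of_eventually_hasSum_pow_smul {a : ℕ → E}
    (h : ∀ᶠ z in 𝓝[≠] (0 : 𝕜), HasSum (fun n => z ^ n • a n) 0) : a = 0 := by
  let p : FormalMultilinearSeries 𝕜 𝕜 E :=
    fun n => ContinuousMultilinearMap.mkPiRing 𝕜 (Fin n) (a n)
  have hcoeff : ∀ n, p.coeff n = a n := fun n => by
    simp [p, FormalMultilinearSeries.coeff, ContinuousMultilinearMap.mkPiRing_apply]
  -- The sum of the series is `0` off the origin and `a 0` at it.
  have hp : HasFPowerSeriesAt (Function.update 0 0 (a 0)) p 0 := by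
    rw [hasFPowerSeriesAt_iff]
    filter_upwards [eventually_nhdsWithin_iff.mp h] with z hz
    simp only [hcoeff, zero_add]
    rcases eq_or_ne z 0 with rfl | hz0
    · simpa using HasSum.hasSum_at_zero a
    · simpa [hz0] using hz hz0
  have hzero : ∃ᶠ z in 𝓝[≠] (0 : 𝕜), Function.update (0 : 𝕜 → E) 0 (a 0) z = 0 :=
    Eventually.frequently (eventually_mem_nhdsWithin.mono fun z hz =>
      Function.update_of_ne (Set.mem_compl_singleton_iff.mp hz) _ _)
  have hp0 : p = 0 :=
    hp.locally_zero_iff.mp (hp.analyticAt.frequently_zero_iff_eventually_zero.mp hzero)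
  funext n
  simp [← hcoeff, hp0, FormalMultilinearSeries.coeff]

end PowerSeries

section EGF

variable {𝕜 : Type*} [NontriviallyNormedField 𝕜]

def HasEGF (c : ℕ → 𝕜) (f : 𝕜 → 𝕜) : Prop :=
  ∀ᶠ z in 𝓝[≠] 0, HasSum (fun n => c n * z ^ n / (n.factorial : 𝕜)) (f z)

namespace HasEGF

variable {c c' : ℕ → 𝕜} {f g : 𝕜 → 𝕜}

theorem congr (h : HasEGF c f) (hfg : f =ᶠ[𝓝[≠] 0] g) : HasEGF c g := by
  filter_upwards [h, hfg] with z hz hfgz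
  rwa [← hfgz]

theorem sub (h : HasEGF c f) (h' : HasEGF c' g) : HasEGF (c - c') (f - g) := by
  filter_upwards [h, h'] with z hz hz'
  simpa only [Pi.sub_apply, sub_mul, sub_div] using hz.sub hz'

theorem mul_const (h : HasEGF c f) (a : 𝕜) :
    HasEGF (fun n => c n * a) (fun z => f z * a) := by
  filter_upwards [h] with z hz
  simpa only [mul_right_comm _ a, div_mul_eq_mul_div] using hz.mul_right a

theorem comp_neg (h : HasEGF c f) : HasEGF (fun n => (-1) ^ n * c n) (fun z => f (-z)) := by
  have hneg : Tendsto (fun z : 𝕜 => -z) (𝓝[≠] 0) (𝓝[≠] 0) :=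
    tendsto_nhdsWithin_of_tendsto_nhds_of_eventually_within _
      ((continuous_neg.tendsto' 0 0 neg_zero).mono_left nhdsWithin_le_nhds)
      (eventually_mem_nhdsWithin.mono fun z hz => neg_ne_zero.mpr hz)
  filter_upwards [hneg.eventually h] with z hz
  convert hz using 2 with n
  rw [neg_pow]
  ring

theorem unique [CharZero 𝕜] (h : HasEGF c f) (h' : HasEGF c' f) : c = c' := by
  have hzero : ∀ᶠ z in 𝓝[≠] (0 : 𝕜),
      HasSum (fun n => z ^ n • ((c n - c' n) / n.factorial)) 0 := by
    filter_upwards [h.sub h'] with z hz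
    simpa only [Pi.sub_apply, sub_self, smul_eq_mul, mul_div_assoc', mul_comm] using hz
  funext n
  have hn := congrFun (eq_zero_of_eventually_hasSum_pow_smul hzero) n
  rwa [Pi.zero_apply, div_eq_zero_iff, sub_eq_zero,
    or_iff_left (Nat.cast_ne_zero.mpr n.factorial_ne_zero)] at hn

end HasEGF

theorem hasEGF_id : HasEGF (fun n => if n = 1 then 1 else 0) (fun z : 𝕜 => z) :=
  Eventually.of_forall fun z => by
    convert hasSum_ite_eq 1 z using 2 with n
    split_ifs with hn <;> simp [hn]

end EGF

theorem ee_add (a b : ℂ) : ee (a + b) = ee a * ee b := by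
  simp only [ee, mul_add, Complex.exp_add]

theorem ee_neg (a : ℂ) : ee (-a) = (ee a)⁻¹ := by
  simp only [ee, mul_neg, Complex.exp_neg]

theorem ee_zero : ee 0 = 1 := by
  simp only [ee, mul_zero, Complex.exp_zero]

theorem ee_ne_zero (a : ℂ) : ee a ≠ 0 := Complex.exp_ne_zero _

def bernoulliGen (X : ℂ) (κ : ℝ) (Z : ℂ) : ℂ :=
  Z * ee (X * κ) * Complex.exp (X * Z) / (ee κ * Complex.exp Z - 1)

theorem bernoulliGen_one_sub_neg (X : ℂ) (κ : ℝ) (Z : ℂ) :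
    bernoulliGen (1 - X) (-κ) Z = bernoulliGen X κ (-Z) := by
  have hee : ee ((1 - X) * ((-κ : ℝ) : ℂ)) = ee (X * κ) * (ee κ)⁻¹ := by
    rw [← ee_neg, ← ee_add]; push_cast; ring_nf
  have hexp : Complex.exp ((1 - X) * Z) = Complex.exp Z * (Complex.exp (X * Z))⁻¹ := by
    rw [← Complex.exp_neg, ← Complex.exp_add]; ring_nf
  have hden : ee κ * Complex.exp (-Z) - 1 =
      (ee ((-κ : ℝ) : ℂ) * Complex.exp Z - 1) * -(ee κ * (Complex.exp Z)⁻¹) := by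
    rw [Complex.ofReal_neg, ee_neg, Complex.exp_neg]
    field_simp [ee_ne_zero, Complex.exp_ne_zero]
    ring
  unfold bernoulliGen
  rw [hee, hexp, hden, mul_neg, Complex.exp_neg]
  rcases eq_or_ne (ee ((-κ : ℝ) : ℂ) * Complex.exp Z - 1) 0 with hD | hD
  · simp only [hD, zero_mul, div_zero]
  · field_simp [ee_ne_zero, Complex.exp_ne_zero]

theorem bernoulliGen_add_one (X : ℂ) {κ : ℝ} {Z : ℂ} (hD : ee κ * Complex.exp Z - 1 ≠ 0) :
    bernoulliGen (X + 1) κ Z = bernoulliGen X κ Z + Z * ee (X * κ) * Complex.exp (X * Z) := by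
  unfold bernoulliGen
  rw [add_one_mul, add_one_mul, ee_add, Complex.exp_add]
  field_simp
  ring

theorem eventually_mul_exp_sub_one_ne_zero {c : ℂ} (hc : c ≠ 0) :
    ∀ᶠ Z in 𝓝[≠] 0, c * Complex.exp Z - 1 ≠ 0 := by
  have hderiv : HasDerivAt (fun Z => c * Complex.exp Z - 1) c 0 := by
    simpa using ((Complex.hasDerivAt_exp 0).const_mul c).sub_const 1
  have hana : AnalyticAt ℂ (fun Z => c * Complex.exp Z - 1) 0 := by fun_prop
  refine hana.eventually_eq_zero_or_eventually_ne_zero.resolve_left fun hzero => hc ?_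
  rw [← hderiv.deriv, EventuallyEq.deriv_eq (f := fun _ => 0) hzero, deriv_const]

theorem bernoulliGen_fract_neg (γ κ : ℝ) :
    bernoulliGen (Int.fract (-γ) : ℝ) (-κ) =ᶠ[𝓝[≠] 0]
      fun Z => bernoulliGen (Int.fract γ : ℝ) κ (-Z) - Z * dInt γ := by
  by_cases hγ : Int.fract γ = 0
  · have hd : dInt γ = 1 := if_pos (Int.fract_eq_zero_iff.mp hγ)
    filter_upwards [eventually_mul_exp_sub_one_ne_zero (ee_ne_zero ((-κ : ℝ) : ℂ))] with Z hD
    have hshift := bernoulliGen_add_one 0 hD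
    rw [zero_add, zero_mul, zero_mul, ee_zero, Complex.exp_zero] at hshift
    rw [Int.fract_neg_eq_zero.mpr hγ, hγ, hd, Complex.ofReal_zero,
      ← bernoulliGen_one_sub_neg, sub_zero, hshift]
    ring
  · have hd : dInt γ = 0 := if_neg (mt Int.fract_eq_zero_iff.mpr hγ)
    refine Eventually.of_forall fun Z => ?_
    beta_reduce
    rw [Int.fract_neg hγ, hd, mul_zero, sub_zero, Complex.ofReal_sub, Complex.ofReal_one,
      bernoulliGen_one_sub_neg]

/-- Lemma 3 of the paper: the reciprocity `𝒞_k(⟨-γ⟩,-κ) = (-1)^k 𝒞_k(⟨γ⟩,κ) - δ_{k1} δ(γ)`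
for the generalized Bernoulli functions, characterized by their Taylor expansion. -/
theorem statement17 (C : ℕ → ℂ → ℝ → ℂ)
    (hC : ∀ (X : ℂ) (κ : ℝ), ∀ᶠ Z in nhdsWithin (0 : ℂ) {(0 : ℂ)}ᶜ,
      HasSum (fun j : ℕ => C j X κ * Z ^ j / (Nat.factorial j : ℂ))
        (Z * ee (X * (κ : ℂ)) * Complex.exp (X * Z) / (ee ((κ : ℝ) : ℂ) * Complex.exp Z - 1))) (γ κ : ℝ) (k : ℕ) :
    C k ((Int.fract (-γ) : ℝ) : ℂ) (-κ) =
      (-1 : ℂ) ^ k * C k ((Int.fract γ : ℝ) : ℂ) κ -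
        (if k = 1 then 1 else 0) * dInt γ := by
  have hgen : ∀ X κ, HasEGF (fun j => C j X κ) (bernoulliGen X κ) := hC
  have hrhs := (hgen (Int.fract γ : ℝ) κ).comp_neg.sub (hasEGF_id.mul_const (dInt γ))
  exact congrFun (((hgen _ (-κ)).congr (bernoulliGen_fract_neg γ κ)).unique hrhs) k
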